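/- arXiv:2202.10651 — 2 statements merged into one kernel-verified Lean document; each statement's English description precedes it below -/
import Mathlib

section
/- Let P and P̃ be transition kernels on a countable state space S such that the potential matrix Φ of P is entrywise finite and bounded, and let ν̃ be a probability measure on S satisfying ν̃P̃ = ν̃ (stationarity for P̃). Then ν̃ = ν̃(P̃ − P)Φ, i.e., for each y ∈ S: ν̃(y) = Σ_{x,z} ν̃(x)(P̃(x,z) − P(x,z))Φ(z,y), with all sums absolutely convergent. -/
open scoped ENNReal

open Classical in
/-- `n`-step transition kernel. -/
noncomputable def kerPow {S : Type*} (P : S → S → ℝ≥0∞) : ℕ → S → S → ℝ≥0∞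
  | 0, x, y => if x = y then 1 else 0
  | (n+1), x, y => ∑' z, P x z * kerPow P n z y

/-- Potential matrix `Φ = Σ_{n≥0} Pⁿ`. -/
noncomputable def potential {S : Type*} (P : S → S → ℝ≥0∞) (x y : S) : ℝ≥0∞ :=
  ∑' n, kerPow P n x y

/-- The (finite, real) potential matrix of a real nonnegative kernel `P`. -/
noncomputable def potentialR {S : Type*} (P : S → S → ℝ) (x y : S) : ℝ :=
  (potential (fun a b => ENNReal.ofReal (P a b)) x y).toReal

open Classical in
/-- `Φ = I + PΦ`. -/
lemma potential_eq_add {S : Type*} (Q : S → S → ℝ≥0∞) (x y : S) :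
    potential Q x y = (if x = y then 1 else 0) + ∑' z, Q x z * potential Q z y := by
  have h := tsum_eq_zero_add' (f := fun n => kerPow Q n x y) ENNReal.summable
  have h0 : kerPow Q 0 x y = (if x = y then 1 else 0) := by simp [kerPow]
  have h1 : ∑' (n : ℕ), kerPow Q (n + 1) x y = ∑' z, Q x z * potential Q z y := by
    simp only [kerPow]
    rw [ENNReal.tsum_comm (f := fun (n : ℕ) (z : S) => Q x z * kerPow Q n z y)]
    congr 1; funext z
    rw [potential, ENNReal.tsum_mul_left]
  rw [potential, h]
  beta_reduce
  rw [h0, h1]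

/-- Compensation equation: if the potential matrix `Φ` of `P` is entrywise finite and
bounded, and `ν̃` is a probability measure on `S` with `ν̃P̃ = ν̃`, then
`ν̃ = ν̃(P̃ − P)Φ`, with all sums absolutely convergent. -/
theorem stmt2 {S : Type*} [Countable S] (P Ptilde : S → S → ℝ) (ν : S → ℝ)
    (hPnn : ∀ x y, 0 ≤ P x y) (hPtnn : ∀ x y, 0 ≤ Ptilde x y)
    (hPstoch : ∀ x, HasSum (P x) 1) (hPtstoch : ∀ x, HasSum (Ptilde x) 1)
    (hνnn : ∀ x, 0 ≤ ν x) (hνprob : HasSum ν 1)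
    (hstat : ∀ y, HasSum (fun x => ν x * Ptilde x y) (ν y))
    (hfin : ∀ x y, potential (fun a b => ENNReal.ofReal (P a b)) x y < ⊤)
    (hbdd : ∃ C : ℝ, ∀ x y, potentialR P x y ≤ C) :
    ∀ y : S,
      Summable (fun p : S × S =>
        |ν p.1 * (Ptilde p.1 p.2 - P p.1 p.2) * potentialR P p.2 y|) ∧
      ∑' p : S × S, ν p.1 * (Ptilde p.1 p.2 - P p.1 p.2) * potentialR P p.2 y = ν y := by
  classical
  intro y
  obtain ⟨C, hC⟩ := hbdd
  set Q : S → S → ℝ≥0∞ := fun a b => ENNReal.ofReal (P a b) with hQdef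
  set Qt : S → S → ℝ≥0∞ := fun a b => ENNReal.ofReal (Ptilde a b) with hQtdef
  set μ : S → ℝ≥0∞ := fun x => ENNReal.ofReal (ν x) with hμdef
  set Φ : S → ℝ≥0∞ := fun z => potential Q z y with hΦdef
  have hΦne : ∀ z, Φ z ≠ ⊤ := fun z => (hfin z y).ne
  have hΦle : ∀ z, Φ z ≤ ENNReal.ofReal C := by
    intro z
    rw [← ENNReal.ofReal_toReal (hΦne z)]
    exact ENNReal.ofReal_le_ofReal (hC z y)
  -- row sums in ℝ≥0∞
  have hQrow : ∀ x, ∑' z, Q x z = 1 := by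
    intro x
    rw [hQdef]
    rw [← ENNReal.ofReal_tsum_of_nonneg (hPnn x) (hPstoch x).summable,
      (hPstoch x).tsum_eq, ENNReal.ofReal_one]
  have hQtrow : ∀ x, ∑' z, Qt x z = 1 := by
    intro x
    rw [hQtdef]
    rw [← ENNReal.ofReal_tsum_of_nonneg (hPtnn x) (hPtstoch x).summable,
      (hPtstoch x).tsum_eq, ENNReal.ofReal_one]
  have hμsum : ∑' x, μ x = 1 := by
    rw [hμdef, ← ENNReal.ofReal_tsum_of_nonneg hνnn hνprob.summable,
      hνprob.tsum_eq, ENNReal.ofReal_one]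
  -- stationarity in ℝ≥0∞
  have hstatE : ∀ z, ∑' x, μ x * Qt x z = μ z := by
    intro z
    have h1 : ∀ x, μ x * Qt x z = ENNReal.ofReal (ν x * Ptilde x z) := fun x => by
      rw [ENNReal.ofReal_mul (hνnn x)]
    simp_rw [h1]
    rw [← ENNReal.ofReal_tsum_of_nonneg (fun x => mul_nonneg (hνnn x) (hPtnn x z))
      (hstat z).summable, (hstat z).tsum_eq]
  -- the two pair sums in ℝ≥0∞
  set A : ℝ≥0∞ := ∑' p : S × S, μ p.1 * Qt p.1 p.2 * Φ p.2 with hAdef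
  set B : ℝ≥0∞ := ∑' p : S × S, μ p.1 * Q p.1 p.2 * Φ p.2 with hBdef
  have hA : A = ∑' z, μ z * Φ z := by
    calc A = ∑' (x : S) (z : S), μ x * Qt x z * Φ z :=
          ENNReal.tsum_prod (f := fun x z => μ x * Qt x z * Φ z)
      _ = ∑' (z : S) (x : S), μ x * Qt x z * Φ z :=
          ENNReal.tsum_comm (f := fun x z => μ x * Qt x z * Φ z)
      _ = ∑' z, μ z * Φ z := by
          congr 1; funext z
          rw [ENNReal.tsum_mul_right (f := fun x => μ x * Qt x z), hstatE z]
  have hAne : A ≠ ⊤ := by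
    refine ne_top_of_le_ne_top ?_ (hA ▸ ENNReal.tsum_le_tsum
      (fun z => mul_le_mul_right (hΦle z) (μ z)))
    rw [ENNReal.tsum_mul_right, hμsum, one_mul]
    exact ENNReal.ofReal_ne_top
  have hB : B = ∑' x, μ x * ∑' z, Q x z * Φ z := by
    calc B = ∑' (x : S) (z : S), μ x * Q x z * Φ z :=
          ENNReal.tsum_prod (f := fun x z => μ x * Q x z * Φ z)
      _ = ∑' x, μ x * ∑' z, Q x z * Φ z := by
          congr 1; funext x
          rw [← ENNReal.tsum_mul_left]
          congr 1; funext z; ring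
  have hAB : A = μ y + B := by
    rw [hA, hB]
    calc ∑' z, μ z * Φ z
        = ∑' x, (μ x * (if x = y then 1 else 0) + μ x * ∑' z, Q x z * Φ z) := by
          congr 1; funext x
          rw [← mul_add, ← potential_eq_add Q x y]
      _ = (∑' x, μ x * (if x = y then 1 else 0)) + ∑' x, μ x * ∑' z, Q x z * Φ z :=
          ENNReal.tsum_add
      _ = μ y + ∑' x, μ x * ∑' z, Q x z * Φ z := by
          congr 1
          rw [show (fun x => μ x * (if x = y then 1 else 0)) =
            (fun x => if x = y then μ x else 0) by funext x; split <;> simp]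
          rw [tsum_eq_single y (fun x hx => if_neg hx)]
          simp
  have hBne : B ≠ ⊤ := fun h => hAne (by rw [hAB, h, add_top])
  -- termwise identities between real and ℝ≥0∞ pair summands
  have hgt : ∀ p : S × S, ENNReal.ofReal (ν p.1 * Ptilde p.1 p.2 * potentialR P p.2 y)
      = μ p.1 * Qt p.1 p.2 * Φ p.2 := by
    intro p
    rw [ENNReal.ofReal_mul (mul_nonneg (hνnn _) (hPtnn _ _)), ENNReal.ofReal_mul (hνnn _)]
    congr 1
    exact (ENNReal.ofReal_toReal (hΦne p.2)).symm ▸ rfl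
  have hg : ∀ p : S × S, ENNReal.ofReal (ν p.1 * P p.1 p.2 * potentialR P p.2 y)
      = μ p.1 * Q p.1 p.2 * Φ p.2 := by
    intro p
    rw [ENNReal.ofReal_mul (mul_nonneg (hνnn _) (hPnn _ _)), ENNReal.ofReal_mul (hνnn _)]
    congr 1
    exact (ENNReal.ofReal_toReal (hΦne p.2)).symm ▸ rfl
  have hnng : ∀ p : S × S, 0 ≤ ν p.1 * Ptilde p.1 p.2 * potentialR P p.2 y :=
    fun p => mul_nonneg (mul_nonneg (hνnn _) (hPtnn _ _)) ENNReal.toReal_nonneg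
  have hnnh : ∀ p : S × S, 0 ≤ ν p.1 * P p.1 p.2 * potentialR P p.2 y :=
    fun p => mul_nonneg (mul_nonneg (hνnn _) (hPnn _ _)) ENNReal.toReal_nonneg
  have htoRg : ∀ p : S × S, ν p.1 * Ptilde p.1 p.2 * potentialR P p.2 y
      = (μ p.1 * Qt p.1 p.2 * Φ p.2).toReal := by
    intro p
    rw [← hgt p, ENNReal.toReal_ofReal (hnng p)]
  have htoRh : ∀ p : S × S, ν p.1 * P p.1 p.2 * potentialR P p.2 y
      = (μ p.1 * Q p.1 p.2 * Φ p.2).toReal := by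
    intro p
    rw [← hg p, ENNReal.toReal_ofReal (hnnh p)]
  have hsumg : Summable (fun p : S × S => ν p.1 * Ptilde p.1 p.2 * potentialR P p.2 y) := by
    simp_rw [htoRg]
    exact ENNReal.summable_toReal hAne
  have hsumh : Summable (fun p : S × S => ν p.1 * P p.1 p.2 * potentialR P p.2 y) := by
    simp_rw [htoRh]
    exact ENNReal.summable_toReal hBne
  have hFeq : (fun p : S × S => ν p.1 * (Ptilde p.1 p.2 - P p.1 p.2) * potentialR P p.2 y)
      = fun p : S × S => ν p.1 * Ptilde p.1 p.2 * potentialR P p.2 y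
        - ν p.1 * P p.1 p.2 * potentialR P p.2 y := by
    funext p; ring
  have hsumF : Summable (fun p : S × S =>
      ν p.1 * (Ptilde p.1 p.2 - P p.1 p.2) * potentialR P p.2 y) := by
    rw [hFeq]; exact hsumg.sub hsumh
  refine ⟨summable_abs_iff.mpr hsumF, ?_⟩
  have htg : ∑' p : S × S, ν p.1 * Ptilde p.1 p.2 * potentialR P p.2 y = A.toReal := by
    simp_rw [htoRg]
    exact (ENNReal.tsum_toReal_eq (fun p : S × S => ENNReal.mul_ne_top
      (ENNReal.mul_ne_top ENNReal.ofReal_ne_top ENNReal.ofReal_ne_top) (hΦne p.2))).symm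
  have hth : ∑' p : S × S, ν p.1 * P p.1 p.2 * potentialR P p.2 y = B.toReal := by
    simp_rw [htoRh]
    exact (ENNReal.tsum_toReal_eq (fun p : S × S => ENNReal.mul_ne_top
      (ENNReal.mul_ne_top ENNReal.ofReal_ne_top ENNReal.ofReal_ne_top) (hΦne p.2))).symm
  rw [hFeq, Summable.tsum_sub hsumg hsumh, htg, hth, hAB,
    ENNReal.toReal_add ENNReal.ofReal_ne_top hBne]
  simp [hμdef, ENNReal.toReal_ofReal (hνnn y)]
end

section
/- Let A_{−1}, A₀, A₁ be n×n nonnegative matrices with A_{−1} + A₀ + A₁ substochastic, and consider the matrix quadratic equation A_{−1} + A₀X + A₁X² = X. The sequence defined by X₀ = 0, X_{m+1} = A_{−1} + A₀X_m + A₁X_m² is entrywise nondecreasing and bounded above by any nonnegative solution; hence it converges to the minimal nonnegative solution G of the equation. -/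
open Filter

/-- The fixed-point iteration `X₀ = 0`, `X_{m+1} = A₋₁ + A₀ X_m + A₁ X_m²`. -/
noncomputable def gIter {n : ℕ} (Am A0 A1 : Matrix (Fin n) (Fin n) ℝ) :
    ℕ → Matrix (Fin n) (Fin n) ℝ
  | 0 => 0
  | (m+1) => Am + A0 * gIter Am A0 A1 m + A1 * (gIter Am A0 A1 m) ^ 2

/-- Let `A₋₁, A₀, A₁` be nonnegative `n×n` matrices with `A₋₁ + A₀ + A₁` substochastic.
The iteration `X₀ = 0`, `X_{m+1} = A₋₁ + A₀X_m + A₁X_m²` is entrywise nondecreasing,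
bounded above by any nonnegative solution of `A₋₁ + A₀X + A₁X² = X`, and converges
(entrywise) to the minimal nonnegative solution `G` of that equation. -/
theorem stmt14 {n : ℕ} (Am A0 A1 : Matrix (Fin n) (Fin n) ℝ)
    (hm : ∀ i j, 0 ≤ Am i j) (h0 : ∀ i j, 0 ≤ A0 i j) (h1 : ∀ i j, 0 ≤ A1 i j)
    (hsub : ∀ i, ∑ j, (Am + A0 + A1) i j ≤ 1) :
    (∀ m i j, gIter Am A0 A1 m i j ≤ gIter Am A0 A1 (m + 1) i j) ∧
      (∀ Y : Matrix (Fin n) (Fin n) ℝ, (∀ i j, 0 ≤ Y i j) →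
        Am + A0 * Y + A1 * Y ^ 2 = Y → ∀ m i j, gIter Am A0 A1 m i j ≤ Y i j) ∧
      ∃ G : Matrix (Fin n) (Fin n) ℝ,
        (∀ i j, 0 ≤ G i j) ∧
        (∀ i j, Tendsto (fun m => gIter Am A0 A1 m i j) atTop (nhds (G i j))) ∧
        Am + A0 * G + A1 * G ^ 2 = G ∧
        ∀ Y : Matrix (Fin n) (Fin n) ℝ, (∀ i j, 0 ≤ Y i j) →
          Am + A0 * Y + A1 * Y ^ 2 = Y → ∀ i j, G i j ≤ Y i j := by
  -- nonnegativity of product entries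
  have mulnn : ∀ (A B : Matrix (Fin n) (Fin n) ℝ), (∀ i j, 0 ≤ A i j) →
      (∀ i j, 0 ≤ B i j) → ∀ i j, 0 ≤ (A * B) i j := by
    intro A B hA hB i j
    simp only [Matrix.mul_apply]
    exact Finset.sum_nonneg fun k _ => mul_nonneg (hA i k) (hB k j)
  -- left multiplication by nonneg matrix is monotone
  have mulmonoL : ∀ (A X Y : Matrix (Fin n) (Fin n) ℝ), (∀ i j, 0 ≤ A i j) →
      (∀ i j, X i j ≤ Y i j) → ∀ i j, (A * X) i j ≤ (A * Y) i j := by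
    intro A X Y hA hXY i j
    simp only [Matrix.mul_apply]
    exact Finset.sum_le_sum fun k _ => mul_le_mul_of_nonneg_left (hXY k j) (hA i k)
  have mulmonoR : ∀ (X Y A : Matrix (Fin n) (Fin n) ℝ), (∀ i j, 0 ≤ A i j) →
      (∀ i j, X i j ≤ Y i j) → ∀ i j, (X * A) i j ≤ (Y * A) i j := by
    intro X Y A hA hXY i j
    simp only [Matrix.mul_apply]
    exact Finset.sum_le_sum fun k _ => mul_le_mul_of_nonneg_right (hXY i k) (hA k j)
  -- monotonicity of the map F
  have Fmono : ∀ (X Y : Matrix (Fin n) (Fin n) ℝ), (∀ i j, 0 ≤ X i j) →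
      (∀ i j, X i j ≤ Y i j) →
      ∀ i j, (Am + A0 * X + A1 * X ^ 2) i j ≤ (Am + A0 * Y + A1 * Y ^ 2) i j := by
    intro X Y hX hXY i j
    have hY : ∀ i j, 0 ≤ Y i j := fun i j => le_trans (hX i j) (hXY i j)
    have h2 : ∀ i j, (X ^ 2) i j ≤ (Y ^ 2) i j := by
      intro i j
      rw [pow_two, pow_two]
      exact le_trans (mulmonoL X X Y hX hXY i j) (mulmonoR X Y Y hY hXY i j)
    simp only [Matrix.add_apply]
    exact add_le_add (add_le_add le_rfl (mulmonoL A0 X Y h0 hXY i j))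
      (mulmonoL A1 _ _ h1 h2 i j)
  -- nonnegativity of iterates
  have hnn : ∀ m i j, 0 ≤ gIter Am A0 A1 m i j := by
    intro m
    induction m with
    | zero => intro i j; simp [gIter]
    | succ m ih =>
      intro i j
      simp only [gIter, Matrix.add_apply]
      have h2 : ∀ i j, 0 ≤ ((gIter Am A0 A1 m) ^ 2) i j := by
        intro i j; rw [pow_two]; exact mulnn _ _ ih ih i j
      exact add_nonneg (add_nonneg (hm i j) (mulnn _ _ h0 ih i j)) (mulnn _ _ h1 h2 i j)
  -- entrywise monotone in m
  have hmono : ∀ m i j, gIter Am A0 A1 m i j ≤ gIter Am A0 A1 (m + 1) i j := by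
    intro m
    induction m with
    | zero => intro i j; simpa [gIter] using hnn 1 i j
    | succ m ih =>
      intro i j
      exact Fmono (gIter Am A0 A1 m) (gIter Am A0 A1 (m + 1)) (hnn m) ih i j
  have hmono' : ∀ i j, Monotone (fun m => gIter Am A0 A1 m i j) :=
    fun i j => monotone_nat_of_le_succ fun m => hmono m i j
  -- row sums bounded by 1
  have hsub' : ∀ i, (∑ j, Am i j) + (∑ j, A0 i j) + (∑ j, A1 i j) ≤ 1 := by
    intro i
    have := hsub i
    simpa [Matrix.add_apply, Finset.sum_add_distrib] using this
  have rowmul : ∀ (A X : Matrix (Fin n) (Fin n) ℝ), (∀ i j, 0 ≤ A i j) →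
      (∀ i j, 0 ≤ X i j) → (∀ i, ∑ j, X i j ≤ 1) →
      ∀ i, ∑ j, (A * X) i j ≤ ∑ j, A i j := by
    intro A X hA hX hXr i
    simp only [Matrix.mul_apply]
    rw [Finset.sum_comm]
    calc ∑ k, ∑ j, A i k * X k j = ∑ k, A i k * ∑ j, X k j := by
          simp [Finset.mul_sum]
      _ ≤ ∑ k, A i k * 1 :=
          Finset.sum_le_sum fun k _ => mul_le_mul_of_nonneg_left (hXr k) (hA i k)
      _ = ∑ k, A i k := by simp
  have hrow : ∀ m i, ∑ j, gIter Am A0 A1 m i j ≤ 1 := by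
    intro m
    induction m with
    | zero => intro i; simp [gIter]
    | succ m ih =>
      intro i
      have h2nn : ∀ i j, 0 ≤ ((gIter Am A0 A1 m) ^ 2) i j := by
        intro i j; rw [pow_two]; exact mulnn _ _ (hnn m) (hnn m) i j
      have h2r : ∀ i, ∑ j, ((gIter Am A0 A1 m) ^ 2) i j ≤ 1 := by
        intro i
        rw [pow_two]
        exact le_trans
          (by simpa using rowmul (gIter Am A0 A1 m) (gIter Am A0 A1 m) (hnn m) (hnn m) ih i)
          (ih i)
      have r0 := rowmul A0 _ h0 (hnn m) ih i
      have r1 := rowmul A1 _ h1 h2nn h2r i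
      calc ∑ j, gIter Am A0 A1 (m + 1) i j
          = (∑ j, Am i j) + (∑ j, (A0 * gIter Am A0 A1 m) i j)
            + (∑ j, (A1 * (gIter Am A0 A1 m) ^ 2) i j) := by
            simp [gIter, Matrix.add_apply, Finset.sum_add_distrib]
        _ ≤ (∑ j, Am i j) + (∑ j, A0 i j) + (∑ j, A1 i j) := by
            exact add_le_add (add_le_add le_rfl r0) r1
        _ ≤ 1 := hsub' i
  -- entries bounded by 1
  have hbdd : ∀ m i j, gIter Am A0 A1 m i j ≤ 1 := by
    intro m i j
    calc gIter Am A0 A1 m i j ≤ ∑ j', gIter Am A0 A1 m i j' :=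
          Finset.single_le_sum (fun k _ => hnn m i k) (Finset.mem_univ j)
      _ ≤ 1 := hrow m i
  -- define G as the supremum
  set G : Matrix (Fin n) (Fin n) ℝ := Matrix.of fun i j => ⨆ m, gIter Am A0 A1 m i j with hG
  have hbddA : ∀ i j, BddAbove (Set.range fun m => gIter Am A0 A1 m i j) := by
    intro i j
    exact ⟨1, by rintro x ⟨m, rfl⟩; exact hbdd m i j⟩
  have htend : ∀ i j, Tendsto (fun m => gIter Am A0 A1 m i j) atTop (nhds (G i j)) := by
    intro i j
    exact tendsto_atTop_ciSup (hmono' i j) (hbddA i j)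
  have hGnn : ∀ i j, 0 ≤ G i j := by
    intro i j
    exact le_of_tendsto_of_tendsto' tendsto_const_nhds (htend i j) (fun m => hnn m i j)
  -- G is a fixed point
  have entry : ∀ (X : Matrix (Fin n) (Fin n) ℝ) i j,
      (Am + A0 * X + A1 * X ^ 2) i j
        = Am i j + (∑ k, A0 i k * X k j) + ∑ k, A1 i k * ∑ l, X k l * X l j := by
    intro X i j
    simp [Matrix.add_apply, Matrix.mul_apply, pow_two]
  have hfix : Am + A0 * G + A1 * G ^ 2 = G := by
    ext i j
    have h1' : Tendsto (fun m => gIter Am A0 A1 (m + 1) i j) atTop (nhds (G i j)) :=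
      (htend i j).comp (tendsto_add_atTop_nat 1)
    have h2' : Tendsto (fun m => gIter Am A0 A1 (m + 1) i j) atTop
        (nhds ((Am + A0 * G + A1 * G ^ 2) i j)) := by
      have : ∀ m, gIter Am A0 A1 (m + 1) i j
          = Am i j + (∑ k, A0 i k * gIter Am A0 A1 m k j)
            + ∑ k, A1 i k * ∑ l, gIter Am A0 A1 m k l * gIter Am A0 A1 m l j := by
        intro m; exact entry (gIter Am A0 A1 m) i j
      rw [entry G i j]
      simp only [this]
      refine Tendsto.add (Tendsto.add tendsto_const_nhds ?_) ?_
      · exact tendsto_finset_sum _ fun k _ => (htend k j).const_mul _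
      · refine tendsto_finset_sum _ fun k _ => ?_
        exact Tendsto.const_mul _
          (tendsto_finset_sum _ fun l _ => (htend k l).mul (htend l j))
    exact tendsto_nhds_unique h2' h1'
  -- bounded above by any nonneg solution
  have hle : ∀ Y : Matrix (Fin n) (Fin n) ℝ, (∀ i j, 0 ≤ Y i j) →
      Am + A0 * Y + A1 * Y ^ 2 = Y → ∀ m i j, gIter Am A0 A1 m i j ≤ Y i j := by
    intro Y hY hYfix m
    induction m with
    | zero => intro i j; simpa [gIter] using hY i j
    | succ m ih =>
      intro i j
      have := Fmono (gIter Am A0 A1 m) Y (hnn m) ih i j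
      rw [hYfix] at this
      exact this
  refine ⟨hmono, hle, G, hGnn, htend, hfix, ?_⟩
  intro Y hY hYfix i j
  exact le_of_tendsto (htend i j) (Eventually.of_forall fun m => hle Y hY hYfix m i j)
end
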